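/- Let Δ(t, x₀, x₁) = e^{2t}((x₀ + t + 1)^{−2} − (x₁ + t + 1)^{−2}), defined on the open set Ω = {(t,x₀,x₁) ∈ ℝ³ : x₀ ≠ −t−1 and x₁ ≠ −t−1}, and let g(t,x) = (1+t)³ + t + (3(1+t)² + 1)x + 3(1+t)x² + x³. Then on Ω both identities hold: ∂Δ/∂t + (t + x₀)∂Δ/∂x₀ + (t + x₁)∂Δ/∂x₁ = 0 and ∂Δ/∂t + g(t,x₀)∂Δ/∂x₀ + g(t,x₁)∂Δ/∂x₁ = 0. That is, Δ is a common first integral of the time-prolongations to ℝ × ℝ² of the time-dependent vector fields X₁(t,x) = (t+x)∂/∂x and X₂(t,x) = g(t,x)∂/∂x. -/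

import Mathlib

/-!
Write `Δ(t, x₀, x₁) = φ(t, x₀) - φ(t, x₁)` with `φ(t, x) = e^{2t} / (x + t + 1)²`. For a one-point
field `(t + x + w) ∂/∂x` one finds `∂φ/∂t + (t + x + w) ∂φ/∂x = -2 e^{2t} w / (x + t + 1)³`.
For `X₁` we have `w = 0`, and since `g(t, x) = t + x + (x + t + 1)³`, for `X₂` the result is
`-2 e^{2t}`, independent of `x`; in both cases the two terms of `Δ` contribute equally and cancel.
-/

/-- `Δ(t, x₀, x₁) = e^{2t}((x₀ + t + 1)^{−2} − (x₁ + t + 1)^{−2})`. -/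
noncomputable def abelDelta : ℝ × ℝ × ℝ → ℝ := fun p =>
  Real.exp (2 * p.1) * (((p.2.1 + p.1 + 1) ^ 2)⁻¹ - ((p.2.2 + p.1 + 1) ^ 2)⁻¹)

/-- `g(t,x) = (1+t)³ + t + (3(1+t)² + 1)x + 3(1+t)x² + x³`. -/
def abelG (t x : ℝ) : ℝ :=
  (1 + t) ^ 3 + t + (3 * (1 + t) ^ 2 + 1) * x + 3 * (1 + t) * x ^ 2 + x ^ 3

theorem ContinuousLinearMap.apply_one_triple {R M : Type*} [CommSemiring R] [TopologicalSpace R]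
    [AddCommMonoid M] [Module R M] [TopologicalSpace M] (L : R × R × R →L[R] M) (a b : R) :
    L (1, a, b) = L (1, 0, 0) + a • L (0, 1, 0) + b • L (0, 0, 1) := by
  rw [← map_smul, ← map_smul, ← map_add, ← map_add]
  simp

theorem fderiv_two_point_sub_apply {𝕜 E F G : Type*} [NontriviallyNormedField 𝕜]
    [NormedAddCommGroup E] [NormedSpace 𝕜 E] [NormedAddCommGroup F] [NormedSpace 𝕜 F]
    [NormedAddCommGroup G] [NormedSpace 𝕜 G] {φ : E × F → G} {t : E} {x y : F}
    (hx : DifferentiableAt 𝕜 φ (t, x)) (hy : DifferentiableAt 𝕜 φ (t, y)) (v : E) (a b : F) :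
    fderiv 𝕜 (fun p : E × F × F => φ (p.1, p.2.1) - φ (p.1, p.2.2)) (t, x, y) (v, a, b)
      = fderiv 𝕜 φ (t, x) (v, a) - fderiv 𝕜 φ (t, y) (v, b) := by
  have h₀ : HasFDerivAt (fun p : E × F × F => φ (p.1, p.2.1)) _ (t, x, y) :=
    hx.hasFDerivAt.comp (t, x, y) (hasFDerivAt_fst.prodMk hasFDerivAt_snd.fst)
  have h₁ : HasFDerivAt (fun p : E × F × F => φ (p.1, p.2.2)) _ (t, x, y) :=
    hy.hasFDerivAt.comp (t, x, y) (hasFDerivAt_fst.prodMk hasFDerivAt_snd.snd)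
  rw [(h₀.fun_sub h₁).fderiv]
  rfl

noncomputable def abelPhi (q : ℝ × ℝ) : ℝ := Real.exp (2 * q.1) * ((q.2 + q.1 + 1) ^ 2)⁻¹

theorem abelDelta_eq_sub_abelPhi :
    abelDelta = fun p => abelPhi (p.1, p.2.1) - abelPhi (p.1, p.2.2) := by
  funext p
  simp only [abelDelta, abelPhi]
  ring

theorem abelG_eq (t x : ℝ) : abelG t x = t + x + (x + t + 1) ^ 3 := by
  unfold abelG; ring

theorem abelPhi_hasFDerivAt {t x : ℝ} (hu : x + t + 1 ≠ 0) :
    HasFDerivAt abelPhi ((2 * Real.exp (2 * t) / (x + t + 1) ^ 3) •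
      ((x + t) • ContinuousLinearMap.fst ℝ ℝ ℝ - ContinuousLinearMap.snd ℝ ℝ ℝ)) (t, x) := by
  have he := ((hasFDerivAt_fst (p := (t, x)) (𝕜 := ℝ)).const_mul 2).exp
  have hu2 : HasFDerivAt (fun q : ℝ × ℝ => (q.2 + q.1 + 1) ^ 2) _ (t, x) :=
    (((hasFDerivAt_snd (p := (t, x)) (𝕜 := ℝ)).add hasFDerivAt_fst).add_const 1).pow 2
  have hi := (hasFDerivAt_inv (pow_ne_zero 2 hu)).comp (t, x) hu2
  refine (he.mul hi).congr_fderiv (ContinuousLinearMap.ext fun q => ?_)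
  simp only [Pi.add_apply, Function.comp_apply, ContinuousLinearMap.comp_apply, add_apply,
    smul_apply, sub_apply, ContinuousLinearMap.coe_fst', ContinuousLinearMap.coe_snd',
    ContinuousLinearMap.toSpanSingleton_apply, smul_eq_mul, nsmul_eq_mul]
  field_simp
  ring

theorem abelPhi_fderiv_apply {t x : ℝ} (hu : x + t + 1 ≠ 0) (w : ℝ) :
    fderiv ℝ abelPhi (t, x) (1, t + x + w) = -(2 * Real.exp (2 * t) * w / (x + t + 1) ^ 3) := by
  rw [(abelPhi_hasFDerivAt hu).fderiv]
  simp only [smul_apply, sub_apply, ContinuousLinearMap.coe_fst', smul_eq_mul, mul_one,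
    ContinuousLinearMap.coe_snd']
  ring

/-- On `Ω = {(t,x₀,x₁) : x₀ ≠ −t−1, x₁ ≠ −t−1}`, the function
`Δ(t,x₀,x₁) = e^{2t}((x₀+t+1)^{−2} − (x₁+t+1)^{−2})` satisfies
`∂Δ/∂t + (t + x₀)∂Δ/∂x₀ + (t + x₁)∂Δ/∂x₁ = 0` and
`∂Δ/∂t + g(t,x₀)∂Δ/∂x₀ + g(t,x₁)∂Δ/∂x₁ = 0`, i.e. `Δ` is a common first integral of the
time-prolongations to `ℝ × ℝ²` of `X₁(t,x) = (t+x)∂/∂x` and `X₂(t,x) = g(t,x)∂/∂x`. -/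
theorem abelDelta_first_integral :
    ∀ p : ℝ × ℝ × ℝ, p.2.1 ≠ -p.1 - 1 → p.2.2 ≠ -p.1 - 1 →
      fderiv ℝ abelDelta p (1, 0, 0)
          + (p.1 + p.2.1) * fderiv ℝ abelDelta p (0, 1, 0)
          + (p.1 + p.2.2) * fderiv ℝ abelDelta p (0, 0, 1) = 0
        ∧
      fderiv ℝ abelDelta p (1, 0, 0)
          + abelG p.1 p.2.1 * fderiv ℝ abelDelta p (0, 1, 0)
          + abelG p.1 p.2.2 * fderiv ℝ abelDelta p (0, 0, 1) = 0 := by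
  rintro ⟨t, x, y⟩ hx₀ hx₁
  have hx : x + t + 1 ≠ 0 := fun h => hx₀ (by linarith)
  have hy : y + t + 1 ≠ 0 := fun h => hx₁ (by linarith)
  have hφ : ∀ a b : ℝ, fderiv ℝ abelDelta (t, x, y) (1, a, b)
      = fderiv ℝ abelPhi (t, x) (1, a) - fderiv ℝ abelPhi (t, y) (1, b) := by
    rw [abelDelta_eq_sub_abelPhi]
    exact fderiv_two_point_sub_apply (abelPhi_hasFDerivAt hx).differentiableAt
      (abelPhi_hasFDerivAt hy).differentiableAt 1
  simp only [← smul_eq_mul]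
  constructor
  · rw [← ContinuousLinearMap.apply_one_triple, hφ, ← add_zero (t + x), ← add_zero (t + y),
      abelPhi_fderiv_apply hx, abelPhi_fderiv_apply hy]
    simp
  · rw [← ContinuousLinearMap.apply_one_triple, hφ, abelG_eq, abelG_eq,
      abelPhi_fderiv_apply hx, abelPhi_fderiv_apply hy]
    field_simp
    ring
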